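/- Let A and B be N×N positive semidefinite complex matrices with rank(A) ≤ r and rank(B) ≤ r. Then |tr(√A) − tr(√B)| ≤ r·√(3·‖A − B‖), where √A, √B denote the positive semidefinite square roots and ‖·‖ is the operator norm. -/

import Mathlib

/-!
Let `M = √A - √B` and let `v` be a unit eigenvector of `M` with eigenvalue `ν`. Since
`A - B = √A M + M √B`, we get `⟪v, (A - B) v⟫ = ν (⟪v, √A v⟫ + ⟪v, √B v⟫)`, while
`ν = ⟪v, √A v⟫ - ⟪v, √B v⟫` is at most that sum in absolute value; hence `ν² ≤ ‖A - B‖`.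
On the kernel of `A` we have `√A = 0`, so `M ≤ 0` there, and `M` has at most `rank A ≤ r`
positive eigenvalues. Therefore `tr √A - tr √B = tr M ≤ r √‖A - B‖`, and symmetrically.
-/

open Matrix
open scoped Matrix.Norms.L2Operator ComplexOrder

/-- The square root of a positive semidefinite matrix (removed from Mathlib; old definition). -/
noncomputable def Matrix.PosSemidef.sqrt {n : Type*} {𝕜 : Type*} [Fintype n] [DecidableEq n]
    [RCLike 𝕜] {A : Matrix n n 𝕜} (hA : A.PosSemidef) : Matrix n n 𝕜 :=
  hA.1.eigenvectorUnitary.1 * diagonal ((↑) ∘ (√·) ∘ hA.1.eigenvalues) *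
    (star hA.1.eigenvectorUnitary : Matrix n n 𝕜)

lemma Fintype.sum_le_card_pos_mul {ι : Type*} [Fintype ι] (f : ι → ℝ) {s : ℝ}
    (hf : ∀ i, f i ≤ s) : ∑ i, f i ≤ Fintype.card {i // 0 < f i} * s := by
  classical
  calc ∑ i, f i ≤ ∑ i with 0 < f i, f i := by
        rw [← Finset.sum_filter_add_sum_filter_not Finset.univ (0 < f ·)]
        grw [Finset.sum_nonpos fun i hi ↦ not_lt.mp (Finset.mem_filter.mp hi).2, add_zero]
    _ ≤ (Finset.univ.filter (0 < f ·)).card • s := Finset.sum_le_card_nsmul _ _ s fun i _ ↦ hf i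
    _ = Fintype.card {i // 0 < f i} * s := by rw [nsmul_eq_mul, Fintype.card_subtype]

namespace Matrix

variable {n 𝕜 : Type*} [Fintype n] [DecidableEq n] [RCLike 𝕜]

namespace PosSemidef

variable {A : Matrix n n 𝕜}

lemma posSemidef_sqrt (hA : A.PosSemidef) : hA.sqrt.PosSemidef := by
  have hD : (diagonal (((↑) : ℝ → 𝕜) ∘ (√·) ∘ hA.1.eigenvalues)).PosSemidef :=
    posSemidef_diagonal_iff.mpr fun _ ↦ RCLike.ofReal_nonneg.mpr (Real.sqrt_nonneg _)
  simpa [PosSemidef.sqrt, ← star_eq_conjTranspose] using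
    hD.mul_mul_conjTranspose_same (hA.1.eigenvectorUnitary : Matrix n n 𝕜)

lemma sqrt_mul_self (hA : A.PosSemidef) : hA.sqrt * hA.sqrt = A := by
  conv_rhs => rw [hA.1.spectral_theorem, Unitary.conjStarAlgAut_apply]
  have hU : (star hA.1.eigenvectorUnitary : Matrix n n 𝕜) * hA.1.eigenvectorUnitary = 1 :=
    Unitary.coe_star_mul_self _
  simp only [PosSemidef.sqrt, mul_assoc]
  rw [← mul_assoc (star _ : Matrix n n 𝕜), hU, one_mul, ← mul_assoc (diagonal _),
    diagonal_mul_diagonal]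
  congr 3
  funext i
  simp [← RCLike.ofReal_mul, Real.mul_self_sqrt (hA.eigenvalues_nonneg i)]

lemma sqrt_mulVec_eq_zero (hA : A.PosSemidef) {v : n → 𝕜} (hv : A *ᵥ v = 0) : hA.sqrt *ᵥ v = 0 := by
  refine dotProduct_star_self_eq_zero.mp ?_
  rw [star_mulVec, dotProduct_mulVec, vecMul_vecMul, hA.posSemidef_sqrt.1.eq,
    ← dotProduct_mulVec, hA.sqrt_mul_self, hv, dotProduct_zero]

end PosSemidef

lemma norm_star_dotProduct_mulVec_le (C : Matrix n n 𝕜) (v : EuclideanSpace 𝕜 n) :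
    ‖star ⇑v ⬝ᵥ (C *ᵥ ⇑v)‖ ≤ ‖C‖ * ‖v‖ ^ 2 := by
  calc ‖star ⇑v ⬝ᵥ (C *ᵥ ⇑v)‖ = ‖inner 𝕜 v (toEuclideanCLM (𝕜 := 𝕜) C v)‖ := by
        rw [EuclideanSpace.inner_eq_star_dotProduct, dotProduct_comm]; rfl
    _ ≤ ‖v‖ * (‖C‖ * ‖v‖) := by
        grw [norm_inner_le_norm, ← l2_opNorm_toEuclideanCLM, ContinuousLinearMap.le_opNorm]
    _ = ‖C‖ * ‖v‖ ^ 2 := by ring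

lemma IsHermitian.sq_eigenvalues_sub_le {X Y : Matrix n n 𝕜} (hX : X.PosSemidef)
    (hY : Y.PosSemidef) (hXY : (X - Y).IsHermitian) (i : n) :
    hXY.eigenvalues i ^ 2 ≤ ‖X * X - Y * Y‖ := by
  set v := hXY.eigenvectorBasis i
  set ν := hXY.eigenvalues i
  set a := star ⇑v ⬝ᵥ (X *ᵥ ⇑v)
  set b := star ⇑v ⬝ᵥ (Y *ᵥ ⇑v)
  have hv : (X - Y) *ᵥ ⇑v = (ν : 𝕜) • ⇑v := by
    rw [hXY.mulVec_eigenvectorBasis, RCLike.real_smul_eq_coe_smul (K := 𝕜)]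
  have hv' : star ⇑v ᵥ* (X - Y) = (ν : 𝕜) • star ⇑v := by
    rw [← hXY.eq, ← star_mulVec, hv, star_smul, RCLike.star_def, RCLike.conj_ofReal]
  have hν : ν = RCLike.re a - RCLike.re b := by
    rw [show ν = _ from hXY.eigenvalues_eq i, sub_mulVec, dotProduct_sub, map_sub]
  have hquad : star ⇑v ⬝ᵥ ((X * X - Y * Y) *ᵥ ⇑v) = ν * (a + b) := by
    rw [show X * X - Y * Y = X * (X - Y) + (X - Y) * Y by noncomm_ring, add_mulVec,
      dotProduct_add, ← mulVec_mulVec, hv, mulVec_smul, dotProduct_smul, ← mulVec_mulVec,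
      dotProduct_mulVec _ (X - Y), hv', smul_dotProduct, smul_eq_mul, smul_eq_mul, mul_add]
  have hν_le : |ν| ≤ ‖a + b‖ := by
    have ha := hX.re_dotProduct_nonneg ⇑v
    have hb := hY.re_dotProduct_nonneg ⇑v
    calc |ν| ≤ RCLike.re (a + b) := by rw [hν, map_add, abs_le]; constructor <;> linarith
      _ ≤ ‖a + b‖ := RCLike.re_le_norm _
  calc ν ^ 2 = |ν| * |ν| := by rw [sq, abs_mul_abs_self]
    _ ≤ |ν| * ‖a + b‖ := by gcongr
    _ = ‖star ⇑v ⬝ᵥ ((X * X - Y * Y) *ᵥ ⇑v)‖ := by rw [hquad, norm_mul, RCLike.norm_ofReal]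
    _ ≤ ‖X * X - Y * Y‖ * ‖v‖ ^ 2 := norm_star_dotProduct_mulVec_le _ _
    _ = ‖X * X - Y * Y‖ := by rw [hXY.eigenvectorBasis.orthonormal.1 i, one_pow, mul_one]

lemma IsHermitian.re_star_dotProduct_mulVec_sum_eigenvectorBasis {M : Matrix n n 𝕜}
    (hM : M.IsHermitian) {ι : Type*} [Fintype ι] {e : ι → n} (he : e.Injective) (c : ι → 𝕜) :
    RCLike.re (star ⇑(∑ i, c i • hM.eigenvectorBasis (e i)) ⬝ᵥ
      (M *ᵥ ⇑(∑ i, c i • hM.eigenvectorBasis (e i)))) =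
      ∑ i, ‖c i‖ ^ 2 * hM.eigenvalues (e i) := by
  have hw : Orthonormal 𝕜 fun i ↦ hM.eigenvectorBasis (e i) :=
    hM.eigenvectorBasis.orthonormal.comp e he
  have hMx : M *ᵥ ⇑(∑ i, c i • hM.eigenvectorBasis (e i)) =
      ⇑(∑ i, (c i * hM.eigenvalues (e i)) • hM.eigenvectorBasis (e i)) := by
    simp only [WithLp.ofLp_sum, WithLp.ofLp_smul, mulVec_sum, mulVec_smul,
      mulVec_eigenvectorBasis, smul_smul, RCLike.real_smul_eq_coe_smul (K := 𝕜)]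
  rw [hMx, dotProduct_comm, ← EuclideanSpace.inner_eq_star_dotProduct, hw.inner_sum, map_sum]
  refine Finset.sum_congr rfl fun i _ ↦ ?_
  rw [← mul_assoc, RCLike.conj_mul, ← RCLike.ofReal_pow, ← RCLike.ofReal_mul, RCLike.ofReal_re]

lemma IsHermitian.card_pos_eigenvalues_le_rank {m : Type*} [Fintype m] {M : Matrix n n 𝕜}
    (hM : M.IsHermitian) (C : Matrix m n 𝕜)
    (hC : ∀ v, C *ᵥ v = 0 → RCLike.re (star v ⬝ᵥ (M *ᵥ v)) ≤ 0) :
    Fintype.card {i // 0 < hM.eigenvalues i} ≤ C.rank := by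
  let φ : ({i // 0 < hM.eigenvalues i} → 𝕜) →ₗ[𝕜] n → 𝕜 :=
    (WithLp.linearEquiv 2 𝕜 (n → 𝕜)).toLinearMap ∘ₗ
      Fintype.linearCombination 𝕜 fun i ↦ hM.eigenvectorBasis i
  have hinj : Function.Injective (C.mulVecLin ∘ₗ φ) := by
    rw [← LinearMap.ker_eq_bot, LinearMap.ker_eq_bot']
    intro c hc
    by_contra hc0
    obtain ⟨i, hi⟩ := Function.ne_iff.mp hc0
    have hle := hC (⇑(∑ j, c j • hM.eigenvectorBasis j)) hc
    rw [hM.re_star_dotProduct_mulVec_sum_eigenvectorBasis Subtype.val_injective] at hle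
    have hpos : 0 < ∑ j, ‖c j‖ ^ 2 * hM.eigenvalues j :=
      Finset.sum_pos' (fun j _ ↦ mul_nonneg (by positivity) j.2.le)
        ⟨i, Finset.mem_univ _, mul_pos (by positivity) i.2⟩
    linarith
  calc Fintype.card {i // 0 < hM.eigenvalues i}
      = Module.finrank 𝕜 ({i // 0 < hM.eigenvalues i} → 𝕜) :=
        (Module.finrank_fintype_fun_eq_card 𝕜).symm
    _ = Module.finrank 𝕜 (LinearMap.range (C.mulVecLin ∘ₗ φ)) :=
        (LinearMap.finrank_range_of_inj hinj).symm
    _ ≤ Module.finrank 𝕜 (LinearMap.range C.mulVecLin) :=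
        Submodule.finrank_mono (LinearMap.range_comp_le_range _ _)
    _ = C.rank := rfl

lemma IsHermitian.re_trace_eq_sum_eigenvalues {M : Matrix n n 𝕜} (hM : M.IsHermitian) :
    RCLike.re M.trace = ∑ i, hM.eigenvalues i := by
  simp [hM.trace_eq_sum_eigenvalues]

lemma PosSemidef.re_trace_sqrt_sub_le {A B : Matrix n n 𝕜} (hA : A.PosSemidef)
    (hB : B.PosSemidef) {r : ℕ} (hr : A.rank ≤ r) :
    RCLike.re hA.sqrt.trace - RCLike.re hB.sqrt.trace ≤ r * √‖A - B‖ := by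
  have hM : (hA.sqrt - hB.sqrt).IsHermitian := hA.posSemidef_sqrt.1.sub hB.posSemidef_sqrt.1
  have heig (i : n) : hM.eigenvalues i ≤ √‖A - B‖ := by
    refine Real.le_sqrt_of_sq_le ?_
    simpa [hA.sqrt_mul_self, hB.sqrt_mul_self] using
      hM.sq_eigenvalues_sub_le hA.posSemidef_sqrt hB.posSemidef_sqrt i
  have hcard : Fintype.card {i // 0 < hM.eigenvalues i} ≤ r := by
    refine (hM.card_pos_eigenvalues_le_rank A fun v hv ↦ ?_).trans hr
    rw [sub_mulVec, dotProduct_sub, hA.sqrt_mulVec_eq_zero hv, dotProduct_zero, zero_sub,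
      map_neg, neg_nonpos]
    exact hB.posSemidef_sqrt.re_dotProduct_nonneg v
  calc RCLike.re hA.sqrt.trace - RCLike.re hB.sqrt.trace
      = ∑ i, hM.eigenvalues i := by rw [← map_sub, ← trace_sub, hM.re_trace_eq_sum_eigenvalues]
    _ ≤ Fintype.card {i // 0 < hM.eigenvalues i} * √‖A - B‖ := Fintype.sum_le_card_pos_mul _ heig
    _ ≤ r * √‖A - B‖ := by gcongr

end Matrix

theorem stmt9 {N : ℕ} (r : ℕ) (A B : Matrix (Fin N) (Fin N) ℂ)
    (hA : A.PosSemidef) (hB : B.PosSemidef)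
    (hrA : A.rank ≤ r) (hrB : B.rank ≤ r) :
    |(hA.sqrt.trace).re - (hB.sqrt.trace).re| ≤ r * Real.sqrt (3 * ‖A - B‖) := by
  have hAB := hA.re_trace_sqrt_sub_le hB hrA
  have hBA := hB.re_trace_sqrt_sub_le hA hrB
  rw [norm_sub_rev] at hBA
  have h3 : r * √‖A - B‖ ≤ r * √(3 * ‖A - B‖) := by
    gcongr
    linarith [norm_nonneg (A - B)]
  rw [abs_sub_le_iff]
  constructor <;> simp only [RCLike.re_to_complex] at hAB hBA <;> linarith
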